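/- Let H be a graph with a matching M on V(H), and suppose H is an M-respecting 2-expander. Let P be a longest M-respecting path in H + M with endpoint v, and let U be the set of endpoints obtainable from P by sequences of M-respecting rotations with v fixed. Then N_H(U) ⊆ V(P), and moreover |N_H(U)| ≤ 2|U| − 1 + |V(M) ∩ N_H(U)|. -/

import Mathlib

open SimpleGraph

/-- A walk `p` is `M`-respecting if every edge of the matching graph `M` either
belongs to the walk's edges or is vertex-disjoint from the walk. -/
def MRespecting {V : Type*} (M : SimpleGraph V) {G : SimpleGraph V} {u v : V}
    (p : G.Walk u v) : Prop :=
  ∀ e ∈ M.edgeSet, e ∈ p.edges ∨ ∀ x, x ∈ e → x ∉ p.support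

/-- `H` is an `M`-respecting 2-expander: `H` is connected and every `U ⊆ V` with
`|U| ≤ |V|/8` satisfies `|N_H(U) \ V(M)| ≥ 2|U|`. -/
def MRespExpander {V : Type*} [Fintype V] (H M : SimpleGraph V) : Prop :=
  H.Connected ∧ ∀ U : Set V, 8 * U.ncard ≤ Fintype.card V →
    2 * U.ncard ≤ (((⋃ u ∈ U, H.neighborSet u) \ U) \ M.support).ncard

/-- `q` is obtained from `p` by a single `M`-respecting rotation with the initial
vertex `v` fixed: writing `p = x₁ … x_i x_{i+1} … x_k`, we break an edge
`x_i x_{i+1} ∉ M` with `x_i x_k ∈ E(H)` to obtain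
`q = x₁ … x_i x_k x_{k-1} … x_{i+1}`. -/
def IsRotationFrom {V : Type*} (H M : SimpleGraph V) {v w u : V}
    (p : (H ⊔ M).Walk v w) (q : (H ⊔ M).Walk v u) : Prop :=
  ∃ (x : V) (p₁ : (H ⊔ M).Walk v x) (h₁ : (H ⊔ M).Adj x u)
    (p₂ : (H ⊔ M).Walk u w) (h₂ : (H ⊔ M).Adj x w),
    H.Adj x w ∧ s(x, u) ∉ M.edgeSet ∧
    p = p₁.append (SimpleGraph.Walk.cons h₁ p₂) ∧
    q = p₁.append (SimpleGraph.Walk.cons h₂ p₂.reverse)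

/-- One rotation step between `M`-respecting paths from `v` (bundled with their
final endpoints). -/
def RotStep {V : Type*} (H M : SimpleGraph V) (v : V)
    (a b : Σ u : V, (H ⊔ M).Walk v u) : Prop :=
  a.2.IsPath ∧ b.2.IsPath ∧ MRespecting M a.2 ∧ MRespecting M b.2 ∧
    IsRotationFrom H M a.2 b.2

/-!
Rotations permute the vertices of a path and preserve its length and `M`-respecting property,
so every path reachable from `P` by rotations is again a longest `M`-respecting path with vertex
set `V(P)`. An `H`-neighbour of its end therefore lies on it: otherwise the path extends by that
vertex, together with its `M`-partner if it has one.

For the count, let `y ∈ N_H(U)` be unmatched and adjacent to the end `x ∈ U` of a rotated path.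
Rotating that path about `y` makes a path-neighbour of `y` an endpoint. If no `P`-neighbour of
`y` were in `U`, rotations would never change the edges at `y` (the only edge a rotation creates
at `y` joins `y` to an endpoint), a contradiction. So `N_H(U) \ V(M)` is covered by the
`P`-neighbourhoods of the vertices of `U`, which have size at most `2`, and at most `1` for
the end `w ∈ U` of `P`.
-/

namespace SimpleGraph.Walk
variable {V : Type*} {G : SimpleGraph V}

section Rotation
variable {v x u w : V} (p₁ : G.Walk v x) (h₁ : G.Adj x u) (p₂ : G.Walk u w) (h₂ : G.Adj x w)

theorem perm_support_rotation :
    (p₁.append (cons h₂ p₂.reverse)).support.Perm (p₁.append (cons h₁ p₂)).support := by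
  simp only [support_append, support_cons, List.tail_cons, support_reverse]
  exact (List.reverse_perm _).append_left _

theorem mem_edges_rotation {e : Sym2 V} :
    e ∈ (p₁.append (cons h₂ p₂.reverse)).edges ↔ e ∈ p₁.edges ∨ e = s(x, w) ∨ e ∈ p₂.edges := by
  simp [edges_append]

theorem mem_edges_append_cons {e : Sym2 V} :
    e ∈ (p₁.append (cons h₁ p₂)).edges ↔ e ∈ p₁.edges ∨ e = s(x, u) ∨ e ∈ p₂.edges := by
  simp [edges_append]

variable {p₁ h₁ p₂} in
theorem IsPath.rotation (hp : (p₁.append (cons h₁ p₂)).IsPath) :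
    (p₁.append (cons h₂ p₂.reverse)).IsPath :=
  isPath_def _ |>.mpr <| (perm_support_rotation p₁ h₁ p₂ h₂).nodup_iff.mpr (isPath_def _ |>.mp hp)

end Rotation

theorem toSubgraph_neighborSet_eq_empty_of_nil {u v : V} {p : G.Walk u v} (hp : p.Nil)
    (x : V) : p.toSubgraph.neighborSet x = ∅ := by
  obtain rfl := hp.eq
  rw [hp.eq_nil]
  ext
  simp

theorem IsPath.ncard_neighborSet_toSubgraph_end_le_one {u v : V} {p : G.Walk u v}
    (hp : p.IsPath) : (p.toSubgraph.neighborSet v).ncard ≤ 1 := by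
  by_cases hnp : p.Nil
  · simp [toSubgraph_neighborSet_eq_empty_of_nil hnp]
  · simp [hp.neighborSet_toSubgraph_endpoint hnp]

theorem IsPath.ncard_neighborSet_toSubgraph_le_two {u v : V} {p : G.Walk u v}
    (hp : p.IsPath) (x : V) : (p.toSubgraph.neighborSet x).ncard ≤ 2 := by
  by_cases hx : x ∈ p.support
  · obtain ⟨i, rfl, hi⟩ := mem_support_iff_exists_getVert.mp hx
    by_cases hnp : p.Nil
    · simp [toSubgraph_neighborSet_eq_empty_of_nil hnp]
    rcases Nat.eq_zero_or_pos i with rfl | hi0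
    · simp [hp.neighborSet_toSubgraph_startpoint hnp]
    rcases hi.lt_or_eq with hlt | rfl
    · exact (hp.ncard_neighborSet_toSubgraph_internal_eq_two hi0.ne' hlt).le
    · simpa using hp.ncard_neighborSet_toSubgraph_end_le_one.trans one_le_two
  · have : p.toSubgraph.neighborSet x = ∅ :=
      Set.eq_empty_of_forall_notMem fun y hy => hx (p.mem_verts_toSubgraph.mp hy.fst_mem)
    simp [this]

theorem IsPath.ncard_biUnion_neighborSet_toSubgraph_add_one_le {u v : V} {p : G.Walk u v}
    (hp : p.IsPath) {S : Finset V} (hv : v ∈ S) :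
    (⋃ x ∈ S, p.toSubgraph.neighborSet x).ncard + 1 ≤ 2 * S.card := by
  classical
  have hsum := S.set_ncard_biUnion_le (p.toSubgraph.neighborSet ·)
  have hrest : ∑ x ∈ S.erase v, (p.toSubgraph.neighborSet x).ncard ≤ (S.erase v).card * 2 :=
    Finset.sum_le_card_nsmul _ _ _ fun x _ => hp.ncard_neighborSet_toSubgraph_le_two x
  rw [← Finset.sum_erase_add S _ hv] at hsum
  have := hp.ncard_neighborSet_toSubgraph_end_le_one
  have := Finset.card_erase_add_one hv
  omega

end SimpleGraph.Walk

section MRespecting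
variable {V : Type*} {G M : SimpleGraph V}

theorem SimpleGraph.mem_support_of_mem_edgeSet {e : Sym2 V} (he : e ∈ M.edgeSet) {y : V}
    (hy : y ∈ e) : y ∈ M.support := by
  induction e using Sym2.ind with
  | _ a b =>
    rcases Sym2.mem_iff.mp hy with rfl | rfl
    · exact ⟨b, he⟩
    · exact ⟨a, M.adj_symm he⟩

theorem eq_of_mem_edgeSet_of_adj (hM : ∀ x, (M.neighborSet x).Subsingleton) {y z : V}
    (hyz : M.Adj y z) {e : Sym2 V} (he : e ∈ M.edgeSet) (hy : y ∈ e) : e = s(y, z) := by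
  induction e using Sym2.ind with
  | _ a b =>
    rcases Sym2.mem_iff.mp hy with rfl | rfl
    · rw [show b = z from hM y he hyz]
    · rw [show a = z from hM y (M.adj_symm he) hyz, Sym2.eq_swap]

theorem MRespecting.rotation {v x u w : V} {p₁ : G.Walk v x} {h₁ : G.Adj x u} {p₂ : G.Walk u w}
    (h₂ : G.Adj x w) (hxu : s(x, u) ∉ M.edgeSet) (hp : MRespecting M (p₁.append (.cons h₁ p₂))) :
    MRespecting M (p₁.append (.cons h₂ p₂.reverse)) := by
  intro e he
  refine (hp e he).imp (fun hmem => ?_) fun hdisj y hy hmem => ?_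
  · rw [Walk.mem_edges_append_cons] at hmem
    rw [Walk.mem_edges_rotation]
    rcases hmem with h | rfl | h
    exacts [Or.inl h, absurd he hxu, Or.inr (Or.inr h)]
  · exact hdisj y hy ((Walk.perm_support_rotation p₁ h₁ p₂ h₂).mem_iff.mp hmem)

theorem MRespecting.concat {v u y : V} {q : G.Walk v u} (hq : MRespecting M q)
    (h : G.Adj u y) (hy : y ∉ M.support) : MRespecting M (q.concat h) := by
  intro e he
  refine (hq e he).imp (fun hmem => ?_) fun hdisj t ht hmem => ?_
  · simp [Walk.edges_concat, hmem]
  · rw [Walk.support_concat, List.mem_append, List.mem_singleton] at hmem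
    rcases hmem with hmem | rfl
    exacts [hdisj t ht hmem, hy (M.mem_support_of_mem_edgeSet he ht)]

theorem MRespecting.concat_concat (hM : ∀ x, (M.neighborSet x).Subsingleton) {v u y z : V}
    {q : G.Walk v u} (hq : MRespecting M q) (h₁ : G.Adj u y) (h₂ : G.Adj y z)
    (hyz : M.Adj y z) : MRespecting M ((q.concat h₁).concat h₂) := by
  intro e he
  by_cases hne : e = s(y, z)
  · simp [Walk.edges_concat, hne]
  refine (hq e he).imp (fun hmem => ?_) fun hdisj t ht hmem => ?_
  · simp [Walk.edges_concat, hmem]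
  · simp only [Walk.support_concat, List.mem_append, List.mem_singleton] at hmem
    rcases hmem with (hmem | rfl) | rfl
    · exact hdisj t ht hmem
    · exact hne (eq_of_mem_edgeSet_of_adj hM hyz he ht)
    · exact hne ((eq_of_mem_edgeSet_of_adj hM hyz.symm he ht).trans Sym2.eq_swap)

theorem SimpleGraph.Walk.IsPath.mem_support_of_adj_of_maximal
    (hM : ∀ x, (M.neighborSet x).Subsingleton) (hMG : M ≤ G) {v u y : V} {q : G.Walk v u}
    (hq : q.IsPath) (hqM : MRespecting M q)
    (hmax : ∀ a b (r : G.Walk a b), r.IsPath → MRespecting M r → r.length ≤ q.length)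
    (huy : G.Adj u y) : y ∈ q.support := by
  by_contra hy
  by_cases hyM : y ∈ M.support
  · obtain ⟨z, hyz⟩ := hyM
    have hz : z ∉ q.support := by
      rcases hqM s(y, z) hyz with hmem | hdisj
      · exact absurd (q.fst_mem_support_of_mem_edges hmem) hy
      · exact hdisj z (Sym2.mem_mk_right y z)
    have hz' : z ∉ (q.concat huy).support := by
      simpa [Walk.support_concat, hz] using hyz.ne.symm
    have := hmax _ _ _ ((hq.concat hy huy).concat hz' (hMG hyz))
      (hqM.concat_concat hM huy (hMG hyz) hyz)
    simp at this
  · have := hmax _ _ _ (hq.concat hy huy) (hqM.concat huy hyM)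
    simp at this

end MRespecting

def rotationEndpoints {V : Type*} (H M : SimpleGraph V) {v w : V} (p : (H ⊔ M).Walk v w) :
    Set V :=
  {u | ∃ q : (H ⊔ M).Walk v u, Relation.ReflTransGen (RotStep H M v) ⟨w, p⟩ ⟨u, q⟩}

namespace RotStep
variable {V : Type*} {H M : SimpleGraph V} {v : V} {a b : Σ u : V, (H ⊔ M).Walk v u}

theorem length_eq (h : RotStep H M v a b) : b.2.length = a.2.length := by
  obtain ⟨-, -, -, -, x, p₁, h₁, p₂, h₂, -, -, ha, hb⟩ := h
  rw [ha, hb]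
  simp

theorem mem_support_iff (h : RotStep H M v a b) {y : V} : y ∈ b.2.support ↔ y ∈ a.2.support := by
  obtain ⟨-, -, -, -, x, p₁, h₁, p₂, h₂, -, -, ha, hb⟩ := h
  rw [ha, hb]
  exact (Walk.perm_support_rotation p₁ h₁ p₂ h₂).mem_iff

/-- Here `x` is the pivot of the rotation. -/
theorem mem_edges (h : RotStep H M v a b) {e : Sym2 V} (he : e ∈ b.2.edges) :
    e ∈ a.2.edges ∨ ∃ x, e = s(x, a.1) ∧ s(x, b.1) ∈ a.2.edges := by
  obtain ⟨-, -, -, -, x, p₁, h₁, p₂, h₂, -, -, ha, hb⟩ := h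
  rw [hb, Walk.mem_edges_rotation] at he
  simp only [ha, Walk.mem_edges_append_cons]
  rcases he with he | rfl | he
  · exact Or.inl (Or.inl he)
  · exact Or.inr ⟨x, rfl, Or.inr (Or.inl rfl)⟩
  · exact Or.inl (Or.inr (Or.inr he))

theorem length_eq_of_reflTransGen (h : Relation.ReflTransGen (RotStep H M v) a b) :
    b.2.length = a.2.length := by
  induction h with
  | refl => rfl
  | tail _ hstep ih => exact hstep.length_eq.trans ih

theorem mem_support_iff_of_reflTransGen (h : Relation.ReflTransGen (RotStep H M v) a b)
    {y : V} : y ∈ b.2.support ↔ y ∈ a.2.support := by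
  induction h with
  | refl => rfl
  | tail _ hstep ih => exact hstep.mem_support_iff.trans ih

theorem isPath_of_reflTransGen (h : Relation.ReflTransGen (RotStep H M v) a b)
    (ha : a.2.IsPath) : b.2.IsPath := by
  rcases h.cases_tail with rfl | ⟨c, -, hstep⟩
  exacts [ha, hstep.2.1]

theorem mRespecting_of_reflTransGen (h : Relation.ReflTransGen (RotStep H M v) a b)
    (ha : MRespecting M a.2) : MRespecting M b.2 := by
  rcases h.cases_tail with rfl | ⟨c, -, hstep⟩
  exacts [ha, hstep.2.2.2.1]

theorem exists_of_adj {u y : V} {q : (H ⊔ M).Walk v u} (hq : q.IsPath)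
    (hqM : MRespecting M q) (hy : y ∈ q.support) (hyu : y ≠ u) (hadj : H.Adj y u)
    (hyM : y ∉ M.support) :
    ∃ (b : V) (q' : (H ⊔ M).Walk v b), RotStep H M v ⟨u, q⟩ ⟨b, q'⟩ ∧ s(y, b) ∈ q.edges := by
  classical
  obtain ⟨b, hyb, r, hr⟩ := Walk.exists_eq_cons_of_ne hyu (q.dropUntil y hy)
  have hq_eq : q = (q.takeUntil y hy).append (.cons hyb r) := by rw [← hr, Walk.take_spec]
  have hyu' : (H ⊔ M).Adj y u := le_sup_left (b := M) hadj
  have hyb_notM : s(y, b) ∉ M.edgeSet := fun h =>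
    hyM (M.mem_support_of_mem_edgeSet h (Sym2.mem_mk_left y b))
  rw [hq_eq] at hq hqM
  refine ⟨b, _, ⟨hq_eq ▸ hq, hq.rotation hyu', hq_eq ▸ hqM, hqM.rotation hyu' hyb_notM,
    y, q.takeUntil y hy, hyb, r, hyu', hadj, hyb_notM, hq_eq, rfl⟩, ?_⟩
  rw [hq_eq, Walk.mem_edges_append_cons]
  exact Or.inr (Or.inl rfl)

end RotStep

section RotationEndpoints
variable {V : Type*} {H M : SimpleGraph V} {v w : V} {p : (H ⊔ M).Walk v w}

theorem rotationEndpoints_subset_support : rotationEndpoints H M p ⊆ {x | x ∈ p.support} :=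
  fun _ ⟨q, hq⟩ => (RotStep.mem_support_iff_of_reflTransGen hq).mp q.end_mem_support

theorem mem_edges_of_reflTransGen_rotStep {y : V} (hyE : y ∉ rotationEndpoints H M p)
    (hnbr : ∀ z ∈ rotationEndpoints H M p, s(y, z) ∉ p.edges) {a : Σ u : V, (H ⊔ M).Walk v u}
    (ha : Relation.ReflTransGen (RotStep H M v) ⟨w, p⟩ a) {z : V} (hz : s(y, z) ∈ a.2.edges) :
    s(y, z) ∈ p.edges := by
  induction ha generalizing z with
  | refl => exact hz
  | tail hb hstep ih =>
    rcases hstep.mem_edges hz with h | ⟨x, hx, hxb⟩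
    · exact ih h
    · rcases Sym2.eq_iff.mp hx with ⟨rfl, rfl⟩ | ⟨rfl, -⟩
      · exact absurd (ih hxb) (hnbr _ ⟨_, hb.tail hstep⟩)
      · exact absurd ⟨_, hb⟩ hyE

theorem mem_support_of_adj_of_mem_rotationEndpoints (hM : ∀ x, (M.neighborSet x).Subsingleton)
    (hp : p.IsPath) (hpM : MRespecting M p)
    (hlong : ∀ a b (q : (H ⊔ M).Walk a b), q.IsPath → MRespecting M q → q.length ≤ p.length)
    {x y : V} (hx : x ∈ rotationEndpoints H M p) (hxy : H.Adj x y) : y ∈ p.support := by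
  obtain ⟨q, hq⟩ := hx
  have hlen := RotStep.length_eq_of_reflTransGen hq
  refine (RotStep.mem_support_iff_of_reflTransGen hq).mp <|
    (RotStep.isPath_of_reflTransGen hq hp).mem_support_of_adj_of_maximal hM le_sup_right
      (RotStep.mRespecting_of_reflTransGen hq hpM) ?_ (le_sup_left (b := M) hxy)
  simpa only [hlen] using hlong

theorem exists_mem_rotationEndpoints_of_adj (hM : ∀ x, (M.neighborSet x).Subsingleton)
    (hp : p.IsPath) (hpM : MRespecting M p)
    (hlong : ∀ a b (q : (H ⊔ M).Walk a b), q.IsPath → MRespecting M q → q.length ≤ p.length)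
    {x y : V} (hx : x ∈ rotationEndpoints H M p) (hxy : H.Adj x y)
    (hyE : y ∉ rotationEndpoints H M p) (hyM : y ∉ M.support) :
    ∃ z ∈ rotationEndpoints H M p, s(y, z) ∈ p.edges := by
  by_contra! hnbr
  have hyp := mem_support_of_adj_of_mem_rotationEndpoints hM hp hpM hlong hx hxy
  obtain ⟨q, hq⟩ := hx
  obtain ⟨b, q', hstep, hyb⟩ := RotStep.exists_of_adj (RotStep.isPath_of_reflTransGen hq hp)
    (RotStep.mRespecting_of_reflTransGen hq hpM)
    ((RotStep.mem_support_iff_of_reflTransGen hq).mpr hyp)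
    (fun h => hyE (h ▸ ⟨q, hq⟩)) hxy.symm hyM
  exact hnbr b ⟨q', hq.tail hstep⟩ (mem_edges_of_reflTransGen_rotStep hyE hnbr hq hyb)

end RotationEndpoints

theorem stmt_19_general {V : Type*} (H M : SimpleGraph V)
    (hM : ∀ x : V, (M.neighborSet x).Subsingleton)
    (v w : V) (p : (H ⊔ M).Walk v w) (hp : p.IsPath) (hpr : MRespecting M p)
    (hlong : ∀ (a b : V) (q : (H ⊔ M).Walk a b),
      q.IsPath → MRespecting M q → q.length ≤ p.length)
    (U : Set V)
    (hU : U = {u | ∃ q : (H ⊔ M).Walk v u,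
      Relation.ReflTransGen (RotStep H M v) ⟨w, p⟩ ⟨u, q⟩}) :
    ((⋃ x ∈ U, H.neighborSet x) \ U) ⊆ {x | x ∈ p.support} ∧
    (((⋃ x ∈ U, H.neighborSet x) \ U).ncard + 1 ≤
      2 * U.ncard + (M.support ∩ ((⋃ x ∈ U, H.neighborSet x) \ U)).ncard) := by
  obtain rfl : U = rotationEndpoints H M p := hU
  set E := rotationEndpoints H M p
  have hNp : (⋃ x ∈ E, H.neighborSet x) \ E ⊆ {x | x ∈ p.support} := by
    rintro y ⟨hy, -⟩
    obtain ⟨x, hx, hxy⟩ := Set.mem_iUnion₂.mp hy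
    exact mem_support_of_adj_of_mem_rotationEndpoints hM hp hpr hlong hx hxy
  refine ⟨hNp, ?_⟩
  have hEfin : E.Finite := p.support.finite_toSet.subset rotationEndpoints_subset_support
  have hcover : ((⋃ x ∈ E, H.neighborSet x) \ E) \ M.support ⊆
      ⋃ x ∈ hEfin.toFinset, p.toSubgraph.neighborSet x := by
    rintro y ⟨⟨hy, hyE⟩, hyM⟩
    obtain ⟨x, hx, hxy⟩ := Set.mem_iUnion₂.mp hy
    obtain ⟨z, hz, hyz⟩ := exists_mem_rotationEndpoints_of_adj hM hp hpr hlong hx hxy hyE hyM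
    exact Set.mem_iUnion₂.mpr ⟨z, hEfin.mem_toFinset.mpr hz,
      Walk.adj_toSubgraph_iff_mem_edges.mpr (Sym2.eq_swap ▸ hyz)⟩
  have hcount := hp.ncard_biUnion_neighborSet_toSubgraph_add_one_le
    (hEfin.mem_toFinset.mpr (show w ∈ E from ⟨p, .refl⟩))
  have hunmatched := Set.ncard_le_ncard hcover
    ((Finset.finite_toSet _).biUnion fun _ _ => p.finite_neighborSet_toSubgraph)
  have hsplit := Set.ncard_inter_add_ncard_sdiff_eq_ncard _ M.support
    (p.support.finite_toSet.subset hNp)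
  rw [Set.ncard_eq_toFinset_card E hEfin, Set.inter_comm]
  omega

/-- Let `H` be an `M`-respecting 2-expander, `P` a longest `M`-respecting path in
`H + M` with endpoint `v`, and `U` the set of endpoints obtainable from `P` by
sequences of `M`-respecting rotations with `v` fixed.  Then `N_H(U) ⊆ V(P)` and
`|N_H(U)| ≤ 2|U| − 1 + |V(M) ∩ N_H(U)|`. -/
theorem stmt_19 {V : Type*} [Fintype V] [DecidableEq V] (H M : SimpleGraph V)
    (hM : ∀ x : V, (M.neighborSet x).Subsingleton)
    (hexp : MRespExpander H M)
    (v w : V) (p : (H ⊔ M).Walk v w) (hp : p.IsPath) (hpr : MRespecting M p)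
    (hlong : ∀ (a b : V) (q : (H ⊔ M).Walk a b),
      q.IsPath → MRespecting M q → q.length ≤ p.length)
    (U : Set V)
    (hU : U = {u | ∃ q : (H ⊔ M).Walk v u,
      Relation.ReflTransGen (RotStep H M v) ⟨w, p⟩ ⟨u, q⟩}) :
    ((⋃ x ∈ U, H.neighborSet x) \ U) ⊆ {x | x ∈ p.support} ∧
    (((⋃ x ∈ U, H.neighborSet x) \ U).ncard + 1 ≤
      2 * U.ncard + (M.support ∩ ((⋃ x ∈ U, H.neighborSet x) \ U)).ncard) :=
  stmt_19_general H M hM v w p hp hpr hlong U hU
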